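/- arXiv:2206.12844 — 9 statements merged into one kernel-verified Lean document; each statement's English description precedes it below -/
import Mathlib

section
/- Let (Q, ·) be a finite quasigroup that is idempotent (x·x = x for all x) and satisfies the Schröder identity (x·y)·(y·x) = x for all x, y. Then the cardinality v of Q satisfies v ≡ 0 (mod 4) or v ≡ 1 (mod 4). -/
/-- A quasigroup structure on a binary operation: all left and right
translations are bijections. -/
def IsQuasigroup {Q : Type*} (op : Q → Q → Q) : Prop :=
  (∀ a : Q, Function.Bijective fun x => op a x) ∧
  (∀ a : Q, Function.Bijective fun x => op x a)

/-- A fixed-point-free involution on a finset gives an even cardinality. -/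
lemma aux_even_card_of_involution {α : Type*} [DecidableEq α] (f : α → α) :
    ∀ (n : ℕ) (s : Finset α), s.card = n →
    (∀ x ∈ s, f x ∈ s) → (∀ x ∈ s, f (f x) = x) → (∀ x ∈ s, f x ≠ x) →
    Even s.card := by
  intro n
  induction n using Nat.strong_induction_on with
  | _ n ih =>
    intro s hn hmap hinv hne
    rcases s.eq_empty_or_nonempty with rfl | ⟨a, ha⟩
    · simp
    · have hfa := hmap a ha
      have hne' := hne a ha
      have hsub : ({a, f a} : Finset α) ⊆ s := by
        intro x hx
        simp only [Finset.mem_insert, Finset.mem_singleton] at hx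
        rcases hx with rfl | rfl <;> assumption
      set t := s \ {a, f a} with ht
      have hmem : ∀ x, x ∈ t ↔ x ∈ s ∧ x ≠ a ∧ x ≠ f a := by
        intro x
        simp [ht, and_assoc]
      have hts : t.card + 2 = s.card := by
        rw [ht, Finset.card_sdiff_of_subset hsub, Finset.card_pair (Ne.symm hne')]
        have := Finset.card_le_card hsub
        rw [Finset.card_pair (Ne.symm hne')] at this
        omega
      have htmap : ∀ x ∈ t, f x ∈ t := by
        intro x hx
        rw [hmem] at hx ⊢
        obtain ⟨hxs, hxa, hxfa⟩ := hx
        refine ⟨hmap x hxs, ?_, ?_⟩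
        · intro h
          apply hxfa
          rw [← hinv x hxs, h]
        · intro h
          apply hxa
          rw [← hinv x hxs, h, hinv a ha]
      have htinv : ∀ x ∈ t, f (f x) = x := fun x hx => hinv x ((hmem x).mp hx).1
      have htne : ∀ x ∈ t, f x ≠ x := fun x hx => hne x ((hmem x).mp hx).1
      have hlt : t.card < n := by omega
      have := ih t.card hlt t rfl htmap htinv htne
      have : Even (t.card + 2) := by
        rcases this with ⟨m, hm⟩
        exact ⟨m + 1, by omega⟩
      rwa [hts] at this

lemma aux_mod_four (v m : ℕ) (h : v * (v - 1) = 4 * m) :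
    v % 4 = 0 ∨ v % 4 = 1 := by
  by_contra hc
  push_neg at hc
  set q := v / 4 with hq
  set r := v % 4 with hrdef
  have hv : v = 4 * q + r := (Nat.div_add_mod v 4).symm
  have hr : r = 2 ∨ r = 3 := by omega
  rcases hr with hr | hr
  · rw [hv, hr] at h
    have e : 4 * q + 2 - 1 = 4 * q + 1 := by omega
    rw [e] at h
    have h3 : (4 * q + 2) * (4 * q + 1) = 16 * (q * q) + 12 * q + 2 := by ring
    rw [h3] at h
    generalize q * q = p at h
    omega
  · rw [hv, hr] at h
    have e : 4 * q + 3 - 1 = 4 * q + 2 := by omega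
    rw [e] at h
    have h3 : (4 * q + 3) * (4 * q + 2) = 16 * (q * q) + 20 * q + 6 := by ring
    rw [h3] at h
    generalize q * q = p at h
    omega

/-- Necessary condition for the existence of an idempotent Schröder quasigroup
of order `v`: `v ≡ 0` or `1 (mod 4)`. -/
theorem idempotent_schroeder_card_mod_four {Q : Type*} [Fintype Q]
    (op : Q → Q → Q) (hq : IsQuasigroup op)
    (hidem : ∀ x, op x x = x)
    (hS : ∀ x y, op (op x y) (op y x) = x) :
    Fintype.card Q % 4 = 0 ∨ Fintype.card Q % 4 = 1 := by
  classical
  set v := Fintype.card Q with hv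
  -- the involution on Sym2 Q
  set f : Sym2 Q → Sym2 Q :=
    Sym2.lift ⟨fun x y => s(op x y, op y x), fun x y => Sym2.eq_swap⟩ with hf
  have hf_mk : ∀ x y : Q, f s(x, y) = s(op x y, op y x) := by
    intro x y; simp [hf]
  set S : Finset (Sym2 Q) := Finset.univ.filter (fun z => ¬ z.IsDiag) with hSdef
  have hmemS : ∀ z, z ∈ S ↔ ¬ z.IsDiag := by intro z; simp [hSdef]
  -- f maps S into S
  have hmap : ∀ z ∈ S, f z ∈ S := by
    intro z hz
    rw [hmemS] at hz ⊢
    induction z using Sym2.ind with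
    | _ x y =>
      rw [Sym2.mk_isDiag_iff] at hz
      rw [hf_mk, Sym2.mk_isDiag_iff]
      intro hc
      apply hz
      have hx : x = op (op x y) (op y x) := (hS x y).symm
      have hy : y = op (op y x) (op x y) := (hS y x).symm
      rw [← hc] at hx hy
      rw [hidem] at hx hy
      exact hx.trans hy.symm
  -- f is an involution
  have hinv : ∀ z ∈ S, f (f z) = z := by
    intro z _
    induction z using Sym2.ind with
    | _ x y => rw [hf_mk, hf_mk, hS, hS]
  -- f is fixed-point free on S
  have hne : ∀ z ∈ S, f z ≠ z := by
    intro z hz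
    rw [hmemS] at hz
    induction z using Sym2.ind with
    | _ x y =>
      rw [Sym2.mk_isDiag_iff] at hz
      rw [hf_mk]
      intro hcc
      rw [Sym2.eq_iff] at hcc
      rcases hcc with ⟨h1, h2⟩ | ⟨h1, h2⟩
      · apply hz
        have : op x y = op x x := by rw [h1, hidem]
        exact ((hq.1 x).injective this).symm
      · apply hz
        have : op x y = op y y := by rw [h1, hidem]
        exact (hq.2 y).injective this
  have heven : Even S.card :=
    aux_even_card_of_involution f S.card S rfl hmap hinv hne
  have hcard : S.card = v.choose 2 := by
    have h1 : Fintype.card {z : Sym2 Q // ¬ z.IsDiag} = v.choose 2 :=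
      Sym2.card_subtype_not_diag
    rw [Fintype.card_subtype] at h1
    exact h1
  rw [hcard, Nat.choose_two_right] at heven
  obtain ⟨m, hm⟩ := heven
  rcases Nat.eq_zero_or_pos v with h0 | h0
  · left; rw [h0]
  · have hcomm : v * (v - 1) = (v - 1) * v := Nat.mul_comm _ _
    rcases Nat.even_mul_succ_self (v - 1) with ⟨k, hk⟩
    have hsucc : v - 1 + 1 = v := by omega
    rw [hsucc] at hk
    rw [hcomm] at hm
    exact aux_mod_four v m (by rw [hcomm]; omega)
end

section
/- There exists a quasigroup (Q, ·) of order 8 that satisfies the Schröder identity of generalized associativity (y·z)·(z·(x·y)) = x for all x, y, z ∈ Q, but possesses no left identity element (no e with e·x = x for all x) and no right identity element (no f with x·f = x for all x); in particular it is not a loop. -/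
/-- The operation `x · y = α⁵x + αy` on GF(8), given as an explicit table. -/
def schroederOp : Fin 8 → Fin 8 → Fin 8 :=
  ![![0, 2, 4, 6, 3, 1, 7, 5],
    ![7, 5, 3, 1, 4, 6, 0, 2],
    ![5, 7, 1, 3, 6, 4, 2, 0],
    ![2, 0, 6, 4, 1, 3, 5, 7],
    ![1, 3, 5, 7, 2, 0, 6, 4],
    ![6, 4, 2, 0, 5, 7, 1, 3],
    ![4, 6, 0, 2, 7, 5, 3, 1],
    ![3, 1, 7, 5, 0, 2, 4, 6]]

/-- There is a quasigroup of order 8 satisfying the Schröder identity of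
generalized associativity `(y·z)·(z·(x·y)) = x` which has neither a left
identity element nor a right identity element (so it is not a loop). -/
theorem exists_schroeder_gen_assoc_quasigroup_not_loop :
    ∃ op : Fin 8 → Fin 8 → Fin 8,
      IsQuasigroup op ∧
      (∀ x y z, op (op y z) (op z (op x y)) = x) ∧
      (¬ ∃ e, ∀ x, op e x = x) ∧
      (¬ ∃ f, ∀ x, op x f = x) := by
  refine ⟨schroederOp, ⟨?_, ?_⟩, ?_, ?_, ?_⟩ <;> decide
end

section
/- Let (Q, +) be an abelian group, let φ and ψ be automorphisms of (Q, +), and define the T-quasigroup operation x·y = φ(x) + ψ(y). Then the Schröder identity of generalized associativity (y·z)·(z·(x·y)) = x holds for all x, y, z ∈ Q if and only if the following three conditions hold: (i) φ(x) = ψ⁻¹(ψ⁻¹(x)) for all x (i.e. φ = ψ⁻²); (ii) φ(φ(y)) + ψ(ψ(ψ(y))) = 0 for all y (equivalently, ψ⁷(x) = −x for all x, whence φ⁷ = id and ψ¹⁴ = id); (iii) φ(ψ(z)) + ψ(φ(z)) = 0 for all z. -/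
/-! Expanded, the Schröder expression is `ψ²φ x + (φ² + ψ³) y + (φψ + ψφ) z`, a sum of
additive maps applied to one variable each; it equals `x` identically iff each summand does,
as setting two of the variables to `0` shows. -/

theorem forall_add_add_eq_iff {M : Type*} [AddZeroClass M] {f g h : M → M}
    (hf : f 0 = 0) (hg : g 0 = 0) (hh : h 0 = 0) :
    (∀ x y z, f x + (g y + h z) = x) ↔ (∀ x, f x = x) ∧ (∀ y, g y = 0) ∧ (∀ z, h z = 0) := by
  refine ⟨fun H => ⟨fun x => ?_, fun y => ?_, fun z => ?_⟩, fun ⟨Hf, Hg, Hh⟩ x y z => ?_⟩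
  · simpa [hg, hh] using H x 0 0
  · simpa [hf, hh] using H 0 y 0
  · simpa [hf, hg] using H 0 0 z
  · rw [Hf, Hg, Hh, add_zero, add_zero]

theorem tquasigroup_schroeder_expr_eq {Q : Type*} [AddCommGroup Q] (φ ψ : AddAut Q) (x y z : Q) :
    φ (φ y + ψ z) + ψ (φ z + ψ (φ x + ψ y)) =
      ψ (ψ (φ x)) + ((φ (φ y) + ψ (ψ (ψ y))) + (φ (ψ z) + ψ (φ z))) := by
  simp only [map_add]
  abel

/-- In a T-quasigroup `x·y = φ(x) + ψ(y)` over an abelian group, the Schröder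
identity of generalized associativity `(y·z)·(z·(x·y)) = x` holds iff
`φ = ψ⁻²`, `φ² + ψ³ = 0` and `φψ + ψφ = 0`. -/
theorem tquasigroup_schroeder_gen_assoc_iff {Q : Type*} [AddCommGroup Q]
    (φ ψ : AddAut Q) :
    (∀ x y z : Q,
        (φ (φ y + ψ z) + ψ (φ z + ψ (φ x + ψ y))) = x) ↔
      ((∀ x : Q, φ x = ψ.symm (ψ.symm x)) ∧
       (∀ y : Q, φ (φ y) + ψ (ψ (ψ y)) = 0) ∧
       (∀ z : Q, φ (ψ z) + ψ (φ z) = 0)) := by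
  simp_rw [tquasigroup_schroeder_expr_eq, AddEquiv.eq_symm_apply]
  exact forall_add_add_eq_iff (f := fun x => ψ (ψ (φ x))) (g := fun y => φ (φ y) + ψ (ψ (ψ y)))
    (h := fun z => φ (ψ z) + ψ (φ z)) (by simp) (by simp) (by simp)
end

section
/- Let (Q, +) be an abelian group, let φ and ψ be commuting automorphisms of (Q, +) (so that x·y = φ(x) + ψ(y) defines a medial quasigroup). Then the Schröder identity of generalized associativity (y·z)·(z·(x·y)) = x holds for all x, y, z ∈ Q if and only if: (i) x + x = 0 for all x ∈ Q (the group (Q, +) is an abelian 2-group); (ii) φ(x) = ψ⁻¹(ψ⁻¹(x)) for all x (i.e. φ = ψ⁻²); and (iii) ψ⁷ = id (whence also φ⁷ = id and ψ¹⁴ = id). -/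
/-!
Expanding `(y·z)·(z·(x·y))` by additivity gives
`ψ²φ x + (φ² + ψ³) y + (φψ + ψφ) z`, so the Schröder identity says exactly that
`ψ²φ = 1`, `φψ + ψφ = 0` and `φ² + ψ³ = 0`. When `φψ = ψφ` is bijective the middle
condition says that `x + x = 0` on all of `Q`; then `φ² + ψ³ = 0` reads `φ² = ψ³`,
which for `φ = ψ⁻²` is `ψ⁷ = 1`.
-/

section TQuasigroup

variable {Q F : Type*} [AddCommGroup Q] [FunLike F Q Q] [AddMonoidHomClass F Q Q]

theorem tquasigroup_schroeder_iff (φ ψ : F) :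
    (∀ x y z : Q, φ (φ y + ψ z) + ψ (φ z + ψ (φ x + ψ y)) = x) ↔
      (∀ x : Q, ψ (ψ (φ x)) = x) ∧ (∀ y : Q, φ (φ y) + ψ (ψ (ψ y)) = 0) ∧
        ∀ z : Q, φ (ψ z) + ψ (φ z) = 0 := by
  constructor
  · intro H
    refine ⟨fun x => by simpa using H x 0 0, fun y => by simpa using H 0 y 0,
      fun z => by simpa using H 0 0 z⟩
  · rintro ⟨hx, hy, hz⟩ x y z
    calc φ (φ y + ψ z) + ψ (φ z + ψ (φ x + ψ y))
        = ψ (ψ (φ x)) + (φ (φ y) + ψ (ψ (ψ y))) + (φ (ψ z) + ψ (φ z)) := by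
          simp only [map_add]; abel
      _ = x := by rw [hx, hy, hz, add_zero, add_zero]

end TQuasigroup

section AddAut

variable {Q : Type*} [AddCommGroup Q]

theorem AddAut.forall_add_comm_eq_zero_iff (φ ψ : AddAut Q)
    (hcomm : ∀ x : Q, φ (ψ x) = ψ (φ x)) :
    (∀ z : Q, φ (ψ z) + ψ (φ z) = 0) ↔ ∀ x : Q, x + x = 0 := by
  have hsurj : Function.Surjective fun z => ψ (φ z) := ψ.surjective.comp φ.surjective
  constructor
  · intro h x
    obtain ⟨z, rfl⟩ := hsurj x
    simpa only [hcomm] using h z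
  · intro h z
    rw [hcomm]
    exact h _

theorem AddAut.forall_apply_apply_apply_eq_self_iff (φ ψ : AddAut Q) :
    (∀ x : Q, ψ (ψ (φ x)) = x) ↔ ∀ x : Q, φ x = ψ.symm (ψ.symm x) := by
  simp only [AddEquiv.eq_symm_apply]

theorem AddAut.forall_apply_apply_eq_cube_iff_pow_seven_eq_self (φ ψ : AddAut Q)
    (hφ : ∀ x : Q, φ x = ψ.symm (ψ.symm x)) :
    (∀ y : Q, φ (φ y) = ψ (ψ (ψ y))) ↔ ∀ y : Q, ψ (ψ (ψ (ψ (ψ (ψ (ψ y)))))) = y := by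
  have hψ4 : Function.Injective fun a : Q => ψ (ψ (ψ (ψ a))) :=
    ψ.injective.comp (ψ.injective.comp (ψ.injective.comp ψ.injective))
  have hinv : ∀ y : Q, ψ (ψ (ψ (ψ (φ (φ y))))) = y := by simp [hφ]
  refine forall_congr' fun y => ?_
  rw [← hψ4.eq_iff, hinv, eq_comm]

end AddAut

theorem add_eq_zero_iff_eq_of_add_self_eq_zero {G : Type*} [AddGroup G] {a b : G}
    (hb : b + b = 0) : a + b = 0 ↔ a = b := by
  rw [add_eq_zero_iff_eq_neg, neg_eq_of_add_eq_zero_left hb]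

/-- In a medial T-quasigroup `x·y = φ(x) + ψ(y)` (with `φψ = ψφ`) over an
abelian group, the Schröder identity of generalized associativity
`(y·z)·(z·(x·y)) = x` holds iff `(Q,+)` is an abelian 2-group, `φ = ψ⁻²`
and `ψ⁷ = id`. -/
theorem medial_tquasigroup_schroeder_gen_assoc_iff {Q : Type*} [AddCommGroup Q]
    (φ ψ : AddAut Q) (hcomm : ∀ x : Q, φ (ψ x) = ψ (φ x)) :
    (∀ x y z : Q,
        (φ (φ y + ψ z) + ψ (φ z + ψ (φ x + ψ y))) = x) ↔
      ((∀ x : Q, x + x = 0) ∧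
       (∀ x : Q, φ x = ψ.symm (ψ.symm x)) ∧
       (∀ x : Q, ψ (ψ (ψ (ψ (ψ (ψ (ψ x)))))) = x)) := by
  rw [tquasigroup_schroeder_iff, AddAut.forall_add_comm_eq_zero_iff φ ψ hcomm,
    AddAut.forall_apply_apply_apply_eq_self_iff]
  constructor
  · rintro ⟨hφ, hsq, h2⟩
    have hsq_eq y := (add_eq_zero_iff_eq_of_add_self_eq_zero (h2 _)).1 (hsq y)
    exact ⟨h2, hφ, (AddAut.forall_apply_apply_eq_cube_iff_pow_seven_eq_self φ ψ hφ).1 hsq_eq⟩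
  · rintro ⟨h2, hφ, h7⟩
    have hsq := (AddAut.forall_apply_apply_eq_cube_iff_pow_seven_eq_self φ ψ hφ).2 h7
    exact ⟨hφ, fun y => (add_eq_zero_iff_eq_of_add_self_eq_zero (h2 _)).2 (hsq y), h2⟩
end

section
/- Let (Q, +) be an abelian group, let φ and ψ be commuting automorphisms of (Q, +) (so that x·y = φ(x) + ψ(y) defines a medial quasigroup). Then the Schröder identity (x·y)·(y·x) = x holds for all x, y ∈ Q if and only if: (i) φ(φ(x)) + ψ(ψ(x)) = x for all x (i.e. φ² + ψ² = ε, the identity map); and (ii) x + x = 0 for all x ∈ Q (the group (Q, +) is an abelian 2-group). -/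
/-- In a medial T-quasigroup `x·y = φ(x) + ψ(y)` (with `φψ = ψφ`) over an
abelian group, the Schröder identity `(x·y)·(y·x) = x` holds iff
`φ² + ψ² = ε` and the group is an abelian 2-group. -/
theorem medial_tquasigroup_schroeder_iff {Q : Type*} [AddCommGroup Q]
    (φ ψ : AddAut Q) (hcomm : ∀ x : Q, φ (ψ x) = ψ (φ x)) :
    (∀ x y : Q, φ (φ x + ψ y) + ψ (φ y + ψ x) = x) ↔
      ((∀ x : Q, φ (φ x) + ψ (ψ x) = x) ∧
       (∀ x : Q, x + x = 0)) := by
  have expand : ∀ x y : Q, φ (φ x + ψ y) + ψ (φ y + ψ x)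
      = (φ (φ x) + ψ (ψ x)) + (φ (ψ y) + φ (ψ y)) := by
    intro x y
    rw [map_add, map_add, hcomm y]
    abel
  constructor
  · intro h
    have h1 : ∀ x : Q, φ (φ x) + ψ (ψ x) = x := by
      intro x
      have := h x 0
      simpa [expand x 0] using this
    refine ⟨h1, fun z => ?_⟩
    obtain ⟨y, rfl⟩ : ∃ y, φ (ψ y) = z := ⟨ψ.symm (φ.symm z), by simp⟩
    have := h 0 y
    rw [expand 0 y, h1 0] at this
    simpa using this
  · rintro ⟨h1, h2⟩ x y
    rw [expand, h1, h2, add_zero]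
end

section
/- Let (Q, +) be an abelian group, let φ and ψ be automorphisms of (Q, +), and define the T-quasigroup operation x·y = φ(x) + ψ(y). Then the identity x·(y·(y·x)) = y holds for all x, y ∈ Q if and only if: (i) φ(x) = −ψ(ψ(ψ(x))) for all x (i.e. φ = Iψ³ where I is the inversion map x ↦ −x); and (ii) ψ⁴(x) + ψ⁵(x) = −x for all x (i.e. ψ⁴ + ψ⁵ = I). -/
/-- In a T-quasigroup `x·y = φ(x) + ψ(y)` over an abelian group, the identity
`x·(y·(y·x)) = y` holds iff `φ = Iψ³` and `ψ⁴ + ψ⁵ = I`, where `I` is the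
inversion map `x ↦ -x`. -/
theorem tquasigroup_x_y_yx_iff {Q : Type*} [AddCommGroup Q]
    (φ ψ : AddAut Q) :
    (∀ x y : Q, φ x + ψ (φ y + ψ (φ y + ψ x)) = y) ↔
      ((∀ x : Q, φ x = -ψ (ψ (ψ x))) ∧
       (∀ x : Q, ψ (ψ (ψ (ψ x))) + ψ (ψ (ψ (ψ (ψ x)))) = -x)) := by
  constructor
  · intro h
    have hφ : ∀ x : Q, φ x = -ψ (ψ (ψ x)) := by
      intro x
      have := h x 0
      simp only [map_zero, zero_add, map_add] at this
      exact eq_neg_of_add_eq_zero_left this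
    refine ⟨hφ, fun y => ?_⟩
    have := h 0 y
    simp only [map_zero, zero_add, add_zero, map_add, hφ, map_neg] at this
    simpa [add_comm] using congrArg Neg.neg this
  · rintro ⟨hφ, hψ⟩ x y
    simp only [hφ, map_add, map_neg]
    have hy : -ψ (ψ (ψ (ψ y))) + -ψ (ψ (ψ (ψ (ψ y)))) = y := by
      rw [← neg_add, hψ y, neg_neg]
    conv_rhs => rw [← hy]
    abel
end

section
/- Let (Q, +) be an abelian group, let φ and ψ be automorphisms of (Q, +), and define the T-quasigroup operation x·y = φ(x) + ψ(y). Then the Stein 3rd identity (x·y)·(y·x) = y holds for all x, y ∈ Q if and only if: (i) φ(φ(x)) + ψ(ψ(x)) = 0 for all x (i.e. φ² + ψ² = 0); and (ii) φ(ψ(y)) + ψ(φ(y)) = y for all y (i.e. φψ + ψφ = ε, the identity map). -/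
/-- In a T-quasigroup `x·y = φ(x) + ψ(y)` over an abelian group, the Stein 3rd
identity `(x·y)·(y·x) = y` holds iff `φ² + ψ² = 0` and `φψ + ψφ = ε`. -/
theorem tquasigroup_stein3_iff {Q : Type*} [AddCommGroup Q]
    (φ ψ : AddAut Q) :
    (∀ x y : Q, φ (φ x + ψ y) + ψ (φ y + ψ x) = y) ↔
      ((∀ x : Q, φ (φ x) + ψ (ψ x) = 0) ∧
       (∀ y : Q, φ (ψ y) + ψ (φ y) = y)) := by
  constructor
  · intro h
    constructor
    · intro x
      have := h x 0
      simpa using this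
    · intro y
      have := h 0 y
      simpa using this
  · rintro ⟨h1, h2⟩ x y
    have := h1 x
    have := h2 y
    simp only [map_add]
    calc φ (φ x) + φ (ψ y) + (ψ (φ y) + ψ (ψ x))
        = (φ (φ x) + ψ (ψ x)) + (φ (ψ y) + ψ (φ y)) := by abel
      _ = y := by rw [h1, h2]; simp
end

section
/- Let (Q, +) be an abelian group, let φ and ψ be commuting automorphisms of (Q, +) (so that x·y = φ(x) + ψ(y) defines a medial quasigroup). Then the Stein 3rd identity (x·y)·(y·x) = y holds for all x, y ∈ Q if and only if: (i) φ(φ(x)) + ψ(ψ(x)) = 0 for all x (i.e. φ² + ψ² = 0); and (ii) φ(ψ(y)) + φ(ψ(y)) = y for all y (i.e. 2φψ = ε, the identity map). -/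
/-- In a medial T-quasigroup `x·y = φ(x) + ψ(y)` (with `φψ = ψφ`) over an
abelian group, the Stein 3rd identity `(x·y)·(y·x) = y` holds iff
`φ² + ψ² = 0` and `2φψ = ε`. -/
theorem medial_tquasigroup_stein3_iff {Q : Type*} [AddCommGroup Q]
    (φ ψ : AddAut Q) (hcomm : ∀ x : Q, φ (ψ x) = ψ (φ x)) :
    (∀ x y : Q, φ (φ x + ψ y) + ψ (φ y + ψ x) = y) ↔
      ((∀ x : Q, φ (φ x) + ψ (ψ x) = 0) ∧
       (∀ y : Q, φ (ψ y) + φ (ψ y) = y)) := by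
  have expand : ∀ x y : Q, φ (φ x + ψ y) + ψ (φ y + ψ x)
      = (φ (φ x) + ψ (ψ x)) + (φ (ψ y) + φ (ψ y)) := by
    intro x y
    simp only [map_add, hcomm y]
    abel
  constructor
  · intro h
    have h1 : ∀ x : Q, φ (φ x) + ψ (ψ x) = 0 := by
      intro x
      have := h x 0
      simpa [expand] using this
    refine ⟨h1, fun y => ?_⟩
    have := h 0 y
    rw [expand, h1 0, zero_add] at this
    exact this
  · rintro ⟨h1, h2⟩ x y
    rw [expand, h1, h2, zero_add]
end

section
/- For every natural number n of the form n = 3^{n₁}·4^{n₂}·5^{n₃}·7^{n₄}·8^{n₅}·11^{n₆}·23^{n₇} (with n₁,…,n₇ natural numbers), there exists a finite quasigroup (Q, ·) of cardinality n satisfying the identity x·(y·(y·x)) = y for all x, y ∈ Q. -/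
private def GoodCard (m : ℕ) : Prop :=
  ∃ (Q : Type) (_ : Fintype Q) (op : Q → Q → Q),
    Fintype.card Q = m ∧ IsQuasigroup op ∧ (∀ x y : Q, op x (op y (op y x)) = y)

private lemma goodCard_one : GoodCard 1 := by
  refine ⟨PUnit, inferInstance, fun _ y => y, by simp, ⟨?_, ?_⟩, ?_⟩ <;>
    intro a <;> first
      | exact Function.bijective_id
      | intro b; exact Subsingleton.elim _ _

private lemma goodCard_mul {m k : ℕ} (hm : GoodCard m) (hk : GoodCard k) :
    GoodCard (m * k) := by
  obtain ⟨Q1, f1, op1, hc1, ⟨hl1, hr1⟩, hi1⟩ := hm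
  obtain ⟨Q2, f2, op2, hc2, ⟨hl2, hr2⟩, hi2⟩ := hk
  refine ⟨Q1 × Q2, inferInstance, fun x y => (op1 x.1 y.1, op2 x.2 y.2),
    by simp [Fintype.card_prod, hc1, hc2], ⟨?_, ?_⟩, ?_⟩
  · intro a
    exact Function.Bijective.prodMap (hl1 a.1) (hl2 a.2)
  · intro a
    exact Function.Bijective.prodMap (hr1 a.1) (hr2 a.2)
  · intro x y
    simp [hi1, hi2]

private lemma goodCard_pow {m : ℕ} (hm : GoodCard m) (k : ℕ) : GoodCard (m ^ k) := by
  induction k with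
  | zero => simpa using goodCard_one
  | succ n ih => rw [pow_succ]; exact goodCard_mul ih hm

private lemma goodCard_3 : GoodCard 3 :=
  ⟨ZMod 3, inferInstance, fun x y => 2 * x + y, by decide, by constructor <;> decide, by decide⟩

private lemma goodCard_5 : GoodCard 5 :=
  ⟨ZMod 5, inferInstance, fun x y => 3 * x + 3 * y, by decide, by constructor <;> decide, by decide⟩

private lemma goodCard_7 : GoodCard 7 :=
  ⟨ZMod 7, inferInstance, fun x y => 6 * x + 2 * y, by decide, by constructor <;> decide, by decide⟩

private lemma goodCard_11 : GoodCard 11 :=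
  ⟨ZMod 11, inferInstance, fun x y => 7 * x + 5 * y, by decide, by constructor <;> decide, by decide⟩

private lemma goodCard_23 : GoodCard 23 :=
  ⟨ZMod 23, inferInstance, fun x y => 11 * x + 13 * y, by decide, by constructor <;> decide,
    by decide⟩

private lemma goodCard_4 : GoodCard 4 :=
  ⟨ZMod 2 × ZMod 2, inferInstance,
    fun x y => (x.1 + y.2, x.2 + y.1 + y.2),
    by decide, by constructor <;> decide, by decide⟩

private lemma goodCard_8 : GoodCard 8 :=
  ⟨ZMod 2 × ZMod 2 × ZMod 2, inferInstance,
    fun x y => (x.1 + x.2.2 + y.2.2, x.2.1 + x.1 + x.2.2 + y.1 + y.2.2,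
      x.2.2 + x.2.1 + y.2.1),
    by decide, by constructor <;> decide, by decide⟩

/-- For every `n = 3^{n₁}·4^{n₂}·5^{n₃}·7^{n₄}·8^{n₅}·11^{n₆}·23^{n₇}` there is
a quasigroup of order `n` satisfying the identity `x·(y·(y·x)) = y`. -/
theorem exists_quasigroup_x_y_yx (n₁ n₂ n₃ n₄ n₅ n₆ n₇ : ℕ) :
    ∃ (Q : Type) (_ : Fintype Q) (op : Q → Q → Q),
      Fintype.card Q = 3 ^ n₁ * 4 ^ n₂ * 5 ^ n₃ * 7 ^ n₄ * 8 ^ n₅ * 11 ^ n₆ * 23 ^ n₇ ∧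
      IsQuasigroup op ∧
      (∀ x y : Q, op x (op y (op y x)) = y) := by
  exact goodCard_mul (goodCard_mul (goodCard_mul (goodCard_mul (goodCard_mul (goodCard_mul
    (goodCard_pow goodCard_3 n₁) (goodCard_pow goodCard_4 n₂))
    (goodCard_pow goodCard_5 n₃)) (goodCard_pow goodCard_7 n₄))
    (goodCard_pow goodCard_8 n₅)) (goodCard_pow goodCard_11 n₆))
    (goodCard_pow goodCard_23 n₇)
end
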